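/- arXiv:2402.00452 — 4 statements merged into one kernel-verified Lean document; each statement's English description precedes it below -/
import Mathlib

section
/- Adding recovered specification preserves satisfaction: if sig(Δ') ⊆ ker μ̂ and the recovery map μ̂⁻¹ satisfies the soundness condition that for every state σ with μ(σ) ⊨_K Δ' one has σ,I ⊨ μ̂⁻¹(Δ'), then for all σ, σ ⊨_K ⟨Δ ∪ Δ' | Φ⟩ iff σ ⊨_K ⟨Δ ∪ Δ' | Φ ∧ μ̂⁻¹(Δ')⟩. -/
universe u v w x

variable {State : Type u} {DI : Type v} {DF : Type w} {SF : Type x}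

/-- A domain interpretation satisfies a set of domain formulas. -/
def SatSet (DSat : DI → DF → Prop) (J : DI) (S : Set DF) : Prop :=
  ∀ δ ∈ S, DSat J δ

/-- Entailment modulo the background theory `K`: every interpretation satisfying
`Δ` and `K` also satisfies `Δ'`. -/
def EntK (DSat : DI → DF → Prop) (K Δ Δ' : Set DF) : Prop :=
  ∀ J : DI, SatSet DSat J Δ → SatSet DSat J K → SatSet DSat J Δ'

/-- Satisfaction of a two-tier assertion ⟨Δ | Φ⟩ by a state `σ`:
`σ,I ⊨ Φ` and `μ(σ), μ̂(Φ) ⊨_K Δ`. -/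
def ASat (SSat : State → SF → Prop) (DSat : DI → DF → Prop) (K : Set DF)
    (liftState : State → Set DF) (liftSpec : SF → Set DF)
    (σ : State) (Δ : Set DF) (Φ : SF) : Prop :=
  SSat σ Φ ∧ ∀ J : DI, SatSet DSat J (liftState σ) → SatSet DSat J (liftSpec Φ) →
    SatSet DSat J K → SatSet DSat J Δ

/-- Compatibility of the state lifting `μ` (represented through the theory
`liftState σ` of `μ(σ)`) and the specification lifting `μ̂ = liftSpec`:
if `σ,I ⊨ Φ` then `μ(σ) ⊨_K μ̂(Φ)`. -/
def Compatible (SSat : State → SF → Prop) (DSat : DI → DF → Prop) (K : Set DF)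
    (liftState : State → Set DF) (liftSpec : SF → Set DF) : Prop :=
  ∀ (σ : State) (Φ : SF), SSat σ Φ →
    ∀ J : DI, SatSet DSat J (liftState σ) → SatSet DSat J K →
      SatSet DSat J (liftSpec Φ)

/-- Validity of a two-tier Hoare triple {⟨Δ₁|Φ₁⟩} s {⟨Δ₂|Φ₂⟩} over
a denotational semantics `sem` of the statement. -/
def Valid (SSat : State → SF → Prop) (DSat : DI → DF → Prop) (K : Set DF)
    (liftState : State → Set DF) (liftSpec : SF → Set DF)
    (sem : State → State → Prop)
    (Δ₁ : Set DF) (Φ₁ : SF) (Δ₂ : Set DF) (Φ₂ : SF) : Prop :=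
  ∀ σ σ' : State, sem σ σ' →
    ASat SSat DSat K liftState liftSpec σ Δ₁ Φ₁ →
    ASat SSat DSat K liftState liftSpec σ' Δ₂ Φ₂

/-- The `cond` operator on relations. -/
def condRel (P : State → Prop) (R₁ R₂ : State → State → Prop) :
    State → State → Prop :=
  fun σ σ' => (P σ ∧ R₁ σ σ') ∨ (¬ P σ ∧ R₂ σ σ')

/-- Semantic implication between two-tier assertions. -/
def ImpK (SSat : State → SF → Prop) (DSat : DI → DF → Prop) (K : Set DF)
    (liftState : State → Set DF) (liftSpec : SF → Set DF)
    (Δ : Set DF) (Φ : SF) (Δ' : Set DF) (Φ' : SF) : Prop :=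
  ∀ σ : State, ASat SSat DSat K liftState liftSpec σ Δ Φ →
    ASat SSat DSat K liftState liftSpec σ Δ' Φ'

/-- adding recovered specification preserves satisfaction. -/
theorem add_recovered_spec_preserves_sat
    (SSat : State → SF → Prop) (DSat : DI → DF → Prop) (K : Set DF)
    (liftState : State → Set DF) (liftSpec : SF → Set DF)
    (hcomp : Compatible SSat DSat K liftState liftSpec)
    (conj : SF → SF → SF)
    (hconjSat : ∀ (σ : State) (Φ Ψ : SF), SSat σ (conj Φ Ψ) ↔ SSat σ Φ ∧ SSat σ Ψ)
    (hconjLift : ∀ Φ Ψ : SF, liftSpec (conj Φ Ψ) = liftSpec Φ ∪ liftSpec Ψ)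
    (InKer : Set DF → Prop)
    (inv : Set DF → SF)
    (hinv : ∀ Δ' : Set DF, InKer Δ' → ∀ σ : State,
      (∀ J : DI, SatSet DSat J (liftState σ) → SatSet DSat J K → SatSet DSat J Δ') →
      SSat σ (inv Δ'))
    (Δ Δ' : Set DF) (Φ : SF) (hker : InKer Δ') :
    ∀ σ : State, ASat SSat DSat K liftState liftSpec σ (Δ ∪ Δ') Φ ↔
      ASat SSat DSat K liftState liftSpec σ (Δ ∪ Δ') (conj Φ (inv Δ')) := by
  intro σ
  constructor
  · rintro ⟨hΦ, hent⟩
    have hinvσ : SSat σ (inv Δ') := by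
      apply hinv Δ' hker σ
      intro J hS hK
      have hΦ' := hcomp σ Φ hΦ J hS hK
      intro δ hδ
      exact hent J hS hΦ' hK δ (Or.inr hδ)
    refine ⟨(hconjSat σ Φ (inv Δ')).2 ⟨hΦ, hinvσ⟩, ?_⟩
    intro J hS hC hK
    rw [hconjLift] at hC
    exact hent J hS (fun δ hδ => hC δ (Or.inl hδ)) hK
  · rintro ⟨hΦΨ, hent⟩
    obtain ⟨hΦ, hΨ⟩ := (hconjSat σ Φ (inv Δ')).1 hΦΨ
    refine ⟨hΦ, ?_⟩
    intro J hS hΦ' hK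
    have hΨ' := hcomp σ (inv Δ') hΨ J hS hK
    apply hent J hS _ hK
    rw [hconjLift]
    intro δ hδ
    rcases hδ with h | h
    · exact hΦ' δ h
    · exact hΨ' δ h
end

section
/- Soundness of the pre-lift rule: if the triple {⟨Δ₁ ∪ μ̂(Φ₁) | Φ₁⟩} s {⟨Δ₂ | Φ₂⟩} is valid, then {⟨Δ₁ | Φ₁⟩} s {⟨Δ₂ | Φ₂⟩} is valid. -/
universe u v w x

variable {State : Type u} {DI : Type v} {DF : Type w} {SF : Type x}

/-- soundness of the pre-lift rule. -/
theorem pre_lift_sound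
    (SSat : State → SF → Prop) (DSat : DI → DF → Prop) (K : Set DF)
    (liftState : State → Set DF) (liftSpec : SF → Set DF)
    (hcomp : Compatible SSat DSat K liftState liftSpec)
    (s : State → State → Prop)
    (Δ₁ Δ₂ : Set DF) (Φ₁ Φ₂ : SF)
    (h : Valid SSat DSat K liftState liftSpec s (Δ₁ ∪ liftSpec Φ₁) Φ₁ Δ₂ Φ₂) :
    Valid SSat DSat K liftState liftSpec s Δ₁ Φ₁ Δ₂ Φ₂ := by
  intro σ σ' hsem ⟨hΦ, hΔ⟩
  exact h σ σ' hsem ⟨hΦ, fun J hst hsp hK δ hδ =>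
    hδ.elim (fun h1 => hΔ J hst hsp hK δ h1)
      (fun h2 => hcomp σ Φ₁ hΦ J hst hK δ h2)⟩
end

section
/- Soundness of the pre-core rule: if Δ₁ ⊨_K α(Δ₁) and {⟨Δ₁ ∪ α(Δ₁)|Φ₁⟩} s {⟨Δ₂|Φ₂⟩} is valid, then {⟨Δ₁|Φ₁⟩} s {⟨Δ₂|Φ₂⟩} is valid. -/
universe u v w x

variable {State : Type u} {DI : Type v} {DF : Type w} {SF : Type x}

/-- soundness of the pre-core rule. -/
theorem pre_core_sound
    (SSat : State → SF → Prop) (DSat : DI → DF → Prop) (K : Set DF)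
    (liftState : State → Set DF) (liftSpec : SF → Set DF)
    (α : Set DF → Set DF)
    (s : State → State → Prop)
    (Δ₁ Δ₂ : Set DF) (Φ₁ Φ₂ : SF)
    (hα : EntK DSat K Δ₁ (α Δ₁))
    (h : Valid SSat DSat K liftState liftSpec s (Δ₁ ∪ α Δ₁) Φ₁ Δ₂ Φ₂) :
    Valid SSat DSat K liftState liftSpec s Δ₁ Φ₁ Δ₂ Φ₂ := by
  intro σ σ' hsem hA
  refine h σ σ' hsem ⟨hA.1, ?_⟩
  intro J h1 h2 h3 δ hδ
  have hΔ₁ := hA.2 J h1 h2 h3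
  rcases hδ with hδ | hδ
  · exact hΔ₁ δ hδ
  · exact hα J hΔ₁ h3 δ hδ
end

section
/- Soundness of the pre-inv rule: under the recovery soundness condition, if sig(Δ₁) ⊆ ker μ̂ and {⟨Δ ∪ Δ₁ | Φ₁ ∧ μ̂⁻¹(Δ₁)⟩} s {⟨Δ₂|Φ₂⟩} is valid, then {⟨Δ ∪ Δ₁ | Φ₁⟩} s {⟨Δ₂|Φ₂⟩} is valid. -/
universe u v w x

variable {State : Type u} {DI : Type v} {DF : Type w} {SF : Type x}

/-- soundness of the pre-inv rule. -/
theorem pre_inv_sound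
    (SSat : State → SF → Prop) (DSat : DI → DF → Prop) (K : Set DF)
    (liftState : State → Set DF) (liftSpec : SF → Set DF)
    (hcomp : Compatible SSat DSat K liftState liftSpec)
    (conj : SF → SF → SF)
    (hconjSat : ∀ (σ : State) (Φ Ψ : SF), SSat σ (conj Φ Ψ) ↔ SSat σ Φ ∧ SSat σ Ψ)
    (hconjLift : ∀ Φ Ψ : SF, liftSpec (conj Φ Ψ) = liftSpec Φ ∪ liftSpec Ψ)
    (InKer : Set DF → Prop)
    (inv : Set DF → SF)
    (hinv : ∀ Δ₀ : Set DF, InKer Δ₀ → ∀ σ : State,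
      (∀ J : DI, SatSet DSat J (liftState σ) → SatSet DSat J K → SatSet DSat J Δ₀) →
      SSat σ (inv Δ₀))
    (s : State → State → Prop)
    (Δ Δ₁ Δ₂ : Set DF) (Φ₁ Φ₂ : SF)
    (hker : InKer Δ₁)
    (h : Valid SSat DSat K liftState liftSpec s (Δ ∪ Δ₁) (conj Φ₁ (inv Δ₁)) Δ₂ Φ₂) :
    Valid SSat DSat K liftState liftSpec s (Δ ∪ Δ₁) Φ₁ Δ₂ Φ₂ := by
  intro σ σ' hsem ⟨hΦ₁, hΔ⟩
  have hΔ' : ∀ J : DI, SatSet DSat J (liftState σ) → SatSet DSat J K →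
      SatSet DSat J (Δ ∪ Δ₁) := fun J hσ hK =>
    hΔ J hσ (hcomp σ Φ₁ hΦ₁ J hσ hK) hK
  have hinvσ : SSat σ (inv Δ₁) :=
    hinv Δ₁ hker σ (fun J hσ hK δ hδ => hΔ' J hσ hK δ (Or.inr hδ))
  refine h σ σ' hsem ⟨(hconjSat σ Φ₁ (inv Δ₁)).2 ⟨hΦ₁, hinvσ⟩, ?_⟩
  intro J hσ hlift hK
  rw [hconjLift] at hlift
  exact hΔ J hσ (fun δ hδ => hlift δ (Or.inl hδ)) hK
end
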